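/- arXiv:1806.10053 — 2 statements merged into one kernel-verified Lean document; each statement's English description precedes it below -/
import Mathlib

section
/- For every positive integer n, the sum over all set partitions w of {1,...,n} of (−2)^(number of parts of w) times the product over parts of (size of part)! times (number of parts − 1)! equals −2·(n−1)! if n is odd, and equals 0 if n is even. -/
/-!
Write the summand as `(t - 1)! * ∏_B (-2 * |B|!)` over the blocks `B`, and let
`O(s) = ∑ t! * ∏_B (-2 * |B|!)` be the corresponding sum over ordered set partitions of `s`.
Splitting off the block that contains a fixed point `x` gives
`C(s) = ∑_{x ∈ B ⊆ s} -2 * |B|! * O(s \ B)`, and splitting off a distinguished block (using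
`t! = t * (t - 1)!`) gives `O(s) = ∑_{∅ ≠ B ⊆ s} -2 * |B|! * O(s \ B)`. The second recursion
yields `O(s) = n! * c_n` with `c_0 = 1`, `c_k = 2 * (-1)^k` for `k ≥ 1` (the coefficients of
`(1 - x) / (1 + x)`), whose partial sums are `(-1)^k`; substituted into the first it gives
`C(s) = -2 * (n - 1)! * ∑_{i < n} (-1)^i`.
-/

open Finset
open scoped Nat

variable {α : Type*} [DecidableEq α] {s B : Finset α}

namespace Finpartition

lemma sup_erase_parts (P : Finpartition s) (hB : B ∈ P.parts) :
    (P.parts.erase B).sup id = s \ B := by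
  ext y
  simp only [sup_eq_biUnion, mem_biUnion, mem_erase, id, mem_sdiff]
  constructor
  · rintro ⟨C, ⟨hCB, hC⟩, hyC⟩
    exact ⟨P.le hC hyC, fun hyB => hCB (P.eq_of_mem_parts hC hB hyC hyB)⟩
  · rintro ⟨hys, hyB⟩
    exact ⟨P.part y, ⟨fun h => hyB (h ▸ P.mem_part_self.2 hys), P.part_mem.2 hys⟩,
      P.mem_part_self.2 hys⟩

def erasePart (P : Finpartition s) (hB : B ∈ P.parts) : Finpartition (s \ B) :=
  P.ofSubset (erase_subset B P.parts) (P.sup_erase_parts hB)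

@[simp]
lemma parts_erasePart (P : Finpartition s) (hB : B ∈ P.parts) :
    (P.erasePart hB).parts = P.parts.erase B := rfl

lemma notMem_parts_sdiff (Q : Finpartition (s \ B)) (hB : B.Nonempty) : B ∉ Q.parts :=
  fun h => by
    obtain ⟨x, hx⟩ := hB
    exact (mem_sdiff.1 (Q.le h hx)).2 hx

lemma parts_extendOfLE_sdiff (Q : Finpartition (s \ B)) (hB : B.Nonempty) (hBs : B ⊆ s) :
    (Q.extendOfLE sdiff_le).parts = insert B Q.parts := by
  rw [parts_extendOfLE_of_lt _ (sdiff_lt hBs hB.ne_empty), Finset.sdiff_sdiff_eq_self hBs]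

lemma extendOfLE_erasePart (P : Finpartition s) (hB : B ∈ P.parts) :
    (P.erasePart hB).extendOfLE sdiff_le = P := by
  ext1
  rw [parts_extendOfLE_sdiff _ (P.nonempty_of_mem_parts hB) (P.le hB), parts_erasePart,
    insert_erase hB]

lemma erasePart_extendOfLE (Q : Finpartition (s \ B)) (hB : B.Nonempty) (hBs : B ⊆ s) :
    (Q.extendOfLE sdiff_le).erasePart
      ((parts_extendOfLE_sdiff Q hB hBs).symm ▸ mem_insert_self B Q.parts) = Q := by
  ext1
  rw [parts_erasePart, parts_extendOfLE_sdiff Q hB hBs,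
    erase_insert (Q.notMem_parts_sdiff hB)]

theorem sum_sum_parts_eq_sum_extendOfLE {M : Type*} [AddCommMonoid M] (s : Finset α)
    (g : Finpartition s → Finset α → M) :
    ∑ P : Finpartition s, ∑ B ∈ P.parts, g P B =
      ∑ B ∈ s.powerset with B.Nonempty,
        ∑ Q : Finpartition (s \ B), g (Q.extendOfLE sdiff_le) B := by
  rw [sum_sigma', sum_sigma']
  refine sum_bij' (fun p hp => ⟨p.2, p.1.erasePart (mem_sigma.1 hp).2⟩)
    (fun p _ => ⟨p.2.extendOfLE sdiff_le, p.1⟩) ?_ ?_ ?_ ?_ ?_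
  · rintro ⟨P, B⟩ hp
    have hB := (mem_sigma.1 hp).2
    simpa using ⟨P.le hB, P.nonempty_of_mem_parts hB⟩
  · rintro ⟨B, Q⟩ hp
    simp only [mem_sigma, mem_filter, mem_powerset] at hp
    simp [parts_extendOfLE_sdiff Q hp.1.2 hp.1.1]
  · rintro ⟨P, B⟩ hp
    simp [extendOfLE_erasePart]
  · rintro ⟨B, Q⟩ hp
    simp only [mem_sigma, mem_filter, mem_powerset] at hp
    simp [erasePart_extendOfLE Q hp.1.2 hp.1.1]
  · rintro ⟨P, B⟩ hp
    simp [extendOfLE_erasePart]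

theorem sum_eq_sum_extendOfLE_of_mem {M : Type*} [AddCommMonoid M] {x : α} (hx : x ∈ s)
    (f : Finpartition s → M) :
    ∑ P : Finpartition s, f P =
      ∑ B ∈ s.powerset with x ∈ B,
        ∑ Q : Finpartition (s \ B), f (Q.extendOfLE sdiff_le) := by
  have hf (P : Finpartition s) : f P = ∑ B ∈ P.parts, if x ∈ B then f P else 0 := by
    rw [sum_eq_single_of_mem (P.part x) (P.part_mem.2 hx), if_pos (P.mem_part_self.2 hx)]
    intro B hB hBx
    rw [if_neg fun hxB => hBx (P.part_eq_of_mem hB hxB).symm]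
  rw [sum_congr rfl fun P _ => hf P, sum_sum_parts_eq_sum_extendOfLE, sum_filter, sum_filter]
  refine sum_congr rfl fun B _ => ?_
  by_cases hxB : x ∈ B
  · simp [hxB, show B.Nonempty from ⟨x, hxB⟩]
  · simp [hxB]

end Finpartition

section Sums

lemma sum_powerset_filter_nonempty_apply_card {M : Type*} [AddCommGroup M] (s : Finset α)
    (F : ℕ → M) :
    ∑ B ∈ s.powerset with B.Nonempty, F #B =
      ∑ j ∈ range #s, (#s).choose (j + 1) • F (j + 1) := by
  have hfilter : {B ∈ s.powerset | B.Nonempty} = s.powerset.erase ∅ := by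
    ext B
    simp [nonempty_iff_ne_empty, and_comm]
  rw [hfilter, sum_erase_eq_sub (empty_mem_powerset s), sum_powerset_apply_card, sum_range_succ']
  simp

lemma sum_powerset_filter_mem_apply_card {M : Type*} [AddCommMonoid M] {x : α} (hx : x ∈ s)
    (F : ℕ → M) :
    ∑ B ∈ s.powerset with x ∈ B, F #B =
      ∑ j ∈ range #s, (#s - 1).choose j • F (j + 1) := by
  have hxs : x ∉ s.erase x := notMem_erase x s
  conv_lhs => rw [sum_filter, ← insert_erase hx, sum_powerset_insert hxs]
  have hnot : ∀ t ∈ (s.erase x).powerset, x ∉ t := fun t ht hxt => hxs (mem_powerset.1 ht hxt)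
  rw [sum_eq_zero fun t ht => if_neg (hnot t ht), zero_add,
    sum_congr rfl fun t ht => by
      rw [if_pos (mem_insert_self x t), card_insert_of_notMem (hnot t ht)],
    sum_powerset_apply_card (fun j => F (j + 1)), card_erase_of_mem hx,
    Nat.sub_add_cancel (card_pos.2 ⟨x, hx⟩)]

lemma sum_range_mul_sub_eq_sum_range_sum (f : ℕ → ℤ) (n : ℕ) :
    ∑ k ∈ range n, ((n : ℤ) - k) * f k = ∑ i ∈ range n, ∑ k ∈ range (i + 1), f k := by
  induction n with
  | zero => simp
  | succ n ih =>
    rw [sum_range_succ (fun i => ∑ k ∈ range (i + 1), f k), ← ih, sum_range_succ,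
      sum_range_succ f]
    push_cast
    simp only [add_sub_right_comm _ (1 : ℤ), add_mul, one_mul, sum_add_distrib]
    ring

end Sums

namespace PartitionSum

open Finpartition

def blockWeight (P : Finpartition s) : ℤ := ∏ B ∈ P.parts, -2 * ((#B)! : ℤ)

def orderedSum (s : Finset α) : ℤ := ∑ P : Finpartition s, ((#P.parts)! : ℤ) * blockWeight P

def cyclicSum (s : Finset α) : ℤ :=
  ∑ P : Finpartition s, ((#P.parts - 1)! : ℤ) * blockWeight P

lemma factorial_pred_mul_blockWeight_extendOfLE (Q : Finpartition (s \ B)) (hB : B.Nonempty)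
    (hBs : B ⊆ s) :
    ((#(Q.extendOfLE sdiff_le).parts - 1)! : ℤ) * blockWeight (Q.extendOfLE sdiff_le) =
      -2 * (#B)! * (((#Q.parts)! : ℤ) * blockWeight Q) := by
  have hQ := Q.notMem_parts_sdiff hB
  rw [blockWeight, blockWeight, parts_extendOfLE_sdiff Q hB hBs, card_insert_of_notMem hQ,
    prod_insert hQ, Nat.add_sub_cancel]
  ring

lemma orderedSum_eq_sum_sdiff (hs : s.Nonempty) :
    orderedSum s = ∑ B ∈ s.powerset with B.Nonempty, -2 * (#B)! * orderedSum (s \ B) := by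
  have hP (P : Finpartition s) :
      ((#P.parts)! : ℤ) * blockWeight P =
        ∑ _B ∈ P.parts, ((#P.parts - 1)! : ℤ) * blockWeight P := by
    have hcard : #P.parts ≠ 0 :=
      (card_pos.2 (P.parts_nonempty (bot_eq_empty (α := α) ▸ hs.ne_empty))).ne'
    rw [sum_const, nsmul_eq_mul, ← mul_assoc, ← Nat.cast_mul, Nat.mul_factorial_pred hcard]
  rw [orderedSum, sum_congr rfl fun P _ => hP P, sum_sum_parts_eq_sum_extendOfLE]
  refine sum_congr rfl fun B hB => ?_
  rw [mem_filter, mem_powerset] at hB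
  rw [orderedSum, mul_sum]
  exact sum_congr rfl fun Q _ => factorial_pred_mul_blockWeight_extendOfLE Q hB.2 hB.1

lemma cyclicSum_eq_sum_sdiff {x : α} (hx : x ∈ s) :
    cyclicSum s = ∑ B ∈ s.powerset with x ∈ B, -2 * (#B)! * orderedSum (s \ B) := by
  rw [cyclicSum, sum_eq_sum_extendOfLE_of_mem hx]
  refine sum_congr rfl fun B hB => ?_
  rw [mem_filter, mem_powerset] at hB
  rw [orderedSum, mul_sum]
  exact sum_congr rfl fun Q _ => factorial_pred_mul_blockWeight_extendOfLE Q ⟨x, hB.2⟩ hB.1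

def orderedCoeff : ℕ → ℤ
  | 0 => 1
  | k + 1 => 2 * (-1) ^ (k + 1)

lemma sum_range_succ_orderedCoeff (n : ℕ) :
    ∑ k ∈ range (n + 1), orderedCoeff k = (-1) ^ n := by
  induction n with
  | zero => simp [orderedCoeff]
  | succ n ih =>
    rw [sum_range_succ, ih, orderedCoeff]
    ring

lemma orderedSum_empty : orderedSum (∅ : Finset α) = 1 := by
  change ∑ P : Finpartition (⊥ : Finset α), _ = 1
  rw [Fintype.sum_unique, Finpartition.default_eq_empty]
  simp [blockWeight]

theorem orderedSum_eq (s : Finset α) : orderedSum s = (#s)! * orderedCoeff #s := by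
  induction s using Finset.strongInduction with
  | H s ih =>
  rcases s.eq_empty_or_nonempty with rfl | hs
  · simp [orderedSum_empty, orderedCoeff]
  obtain ⟨n, hn⟩ : ∃ n, #s = n + 1 := Nat.exists_eq_add_one.2 (card_pos.2 hs)
  let F (j : ℕ) : ℤ := -2 * j ! * ((n + 1 - j)! * orderedCoeff (n + 1 - j))
  calc orderedSum s
      = ∑ B ∈ s.powerset with B.Nonempty, -2 * (#B)! * orderedSum (s \ B) :=
        orderedSum_eq_sum_sdiff hs
    _ = ∑ B ∈ s.powerset with B.Nonempty, F #B := by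
        refine sum_congr rfl fun B hB => ?_
        rw [mem_filter, mem_powerset] at hB
        rw [ih _ (sdiff_ssubset hB.1 hB.2), card_sdiff_of_subset hB.1, hn]
    _ = ∑ j ∈ range (n + 1), (n + 1).choose (j + 1) • F (j + 1) := by
        rw [sum_powerset_filter_nonempty_apply_card, hn]
    _ = -2 * (n + 1)! * ∑ j ∈ range (n + 1), orderedCoeff (n - j) := by
        rw [mul_sum]
        refine sum_congr rfl fun j hj => ?_
        have hchoose := Nat.choose_mul_factorial_mul_factorial
          (Nat.succ_le_succ (Nat.lt_succ_iff.1 (mem_range.1 hj)))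
        simp only [F, nsmul_eq_mul, Nat.add_sub_add_right] at hchoose ⊢
        rw [← hchoose]
        push_cast
        ring
    _ = (#s)! * orderedCoeff #s := by
        have hreflect := sum_range_reflect orderedCoeff (n + 1)
        rw [Nat.add_sub_cancel] at hreflect
        rw [hreflect, sum_range_succ_orderedCoeff, hn, orderedCoeff]
        ring

theorem cyclicSum_eq {x : α} (hx : x ∈ s) :
    cyclicSum s = if Odd #s then -2 * ((#s - 1)! : ℤ) else 0 := by
  obtain ⟨m, hm⟩ : ∃ m, #s = m + 1 := Nat.exists_eq_add_one.2 (card_pos.2 ⟨x, hx⟩)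
  let F (j : ℕ) : ℤ := -2 * j ! * ((m + 1 - j)! * orderedCoeff (m + 1 - j))
  calc cyclicSum s
      = ∑ B ∈ s.powerset with x ∈ B, -2 * (#B)! * orderedSum (s \ B) :=
        cyclicSum_eq_sum_sdiff hx
    _ = ∑ B ∈ s.powerset with x ∈ B, F #B := by
        refine sum_congr rfl fun B hB => ?_
        rw [mem_filter, mem_powerset] at hB
        rw [orderedSum_eq, card_sdiff_of_subset hB.1, hm]
    _ = ∑ j ∈ range (m + 1), m.choose j • F (j + 1) := by
        rw [sum_powerset_filter_mem_apply_card hx, hm, Nat.add_sub_cancel]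
    _ = -2 * m ! * ∑ j ∈ range (m + 1), ((j : ℤ) + 1) * orderedCoeff (m - j) := by
        rw [mul_sum]
        refine sum_congr rfl fun j hj => ?_
        have hchoose := Nat.choose_mul_factorial_mul_factorial (Nat.lt_succ_iff.1 (mem_range.1 hj))
        simp only [F, nsmul_eq_mul, Nat.add_sub_add_right, Nat.factorial_succ]
        rw [← hchoose]
        push_cast
        ring
    _ = -2 * m ! * ∑ k ∈ range (m + 1), (((m + 1 : ℕ) : ℤ) - k) * orderedCoeff k := by
        rw [← sum_range_reflect]
        refine congrArg _ (sum_congr rfl fun j hj => ?_)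
        have hj : j ≤ m := Nat.lt_succ_iff.1 (mem_range.1 hj)
        rw [Nat.add_sub_cancel, Nat.cast_sub hj, Nat.sub_sub_self hj]
        push_cast
        ring
    _ = -2 * m ! * ∑ i ∈ range (m + 1), (-1) ^ i := by
        rw [sum_range_mul_sub_eq_sum_range_sum]
        simp only [sum_range_succ_orderedCoeff]
    _ = if Odd #s then -2 * ((#s - 1)! : ℤ) else 0 := by
        rw [neg_one_geom_sum, hm, Nat.add_sub_cancel]
        simp only [← Nat.not_even_iff_odd]
        split_ifs <;> ring

end PartitionSum

open PartitionSum in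
theorem g_at_neg_two (n : ℕ) (hn : 0 < n) :
    ∑ w : Finpartition (Finset.univ : Finset (Fin n)),
      (-2 : ℤ) ^ w.parts.card * (∏ p ∈ w.parts, (Nat.factorial p.card : ℤ)) *
        (Nat.factorial (w.parts.card - 1) : ℤ)
    = if Odd n then -2 * (Nat.factorial (n - 1) : ℤ) else 0 := by
  have hcyclic := cyclicSum_eq (mem_univ (⟨0, hn⟩ : Fin n))
  rw [Finset.card_fin] at hcyclic
  rw [← hcyclic, cyclicSum]
  refine sum_congr rfl fun w _ => ?_
  rw [blockWeight, prod_mul_distrib, prod_const]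
  ring
end

section
/- For every positive integer n and every set partition r of {1,...,n}, the signed sum over all pairs (q,t) in the fiber f^{-1}(r) of the flattening map, of 2^{#q} · (−1)^{#q − #t} · (∏_i (#q_i)!) · (∏_j (#t_j − 1)!), equals 2^{#r} · ∏_i (#r_i − 1)! if all parts of r have odd cardinality, and equals 0 if some part of r has even cardinality. -/
/-!
A pair `(q, t)` flattens to `r` exactly when `q` refines `r` and `t` groups the blocks of `q` by
the block of `r` containing them, so the inner sum has at most one term. Its weight equals
`(-1)^#r ∏_{p ∈ r} (-2)^{#π_p} (#π_p - 1)! ∏_{b ∈ π_p} (#b)!`, where `π_p` is the partition of `p`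
induced by `q`, and refinements of `r` are families of partitions of its blocks, so the whole sum
factors over the blocks of `r`. For a block of size `m` the factor is `m!` times the coefficient
of `x^m` in `-log (1 - g)`, `g = -2x / (1 - x)`, that is in `-log ((1 + x) / (1 - x))`, which is
`-2/m` for odd `m` and `0` for even `m`. Instead of power series we remove one block of a
partition: with `(#π)!` in place of `(#π - 1)!` the sum has generating function
`1 / (1 - g) = (1 - x) / (1 + x)` and satisfies a convolution recursion, and multiplying the
original sum by `m = ∑_{b ∈ π} #b` expresses it through that one.
-/

open Finset Nat

namespace Finpartition

variable {α : Type*} [DecidableEq α]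

lemma prod_prod_parts {M : Type*} [CommMonoid M] {s : Finset α} (P : Finpartition s)
    (f : α → M) : ∏ c ∈ P.parts, ∏ x ∈ c, f x = ∏ x ∈ s, f x := by
  conv_rhs => rw [← P.biUnion_parts]
  exact (prod_biUnion P.disjoint).symm

variable {s : Finset α} {q r : Finpartition s}

lemma filter_subset_sup_eq (t : Finpartition q.parts) {c : Finset (Finset α)}
    (hc : c ∈ t.parts) : q.parts.filter (· ⊆ c.sup id) = c := by
  ext b
  rw [mem_filter]
  refine ⟨fun ⟨hb, hbc⟩ => ?_, fun hb => ⟨t.le hc hb, le_sup (f := id) hb⟩⟩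
  obtain ⟨x, hx⟩ := q.nonempty_of_mem_parts hb
  obtain ⟨b', hb', hxb'⟩ := mem_sup.mp (hbc hx)
  rwa [q.eq_of_mem_parts hb (t.le hc hb') hx hxb']

lemma sup_filter_subset_eq (h : q ≤ r) {p : Finset α} (hp : p ∈ r.parts) :
    (q.parts.filter (· ⊆ p)).sup id = p := by
  ext x
  rw [mem_sup]
  refine ⟨fun ⟨b, hb, hxb⟩ => (mem_filter.mp hb).2 hxb, fun hxp => ?_⟩
  obtain ⟨b, hb, hxb⟩ := q.exists_mem (r.le hp hxp)
  obtain ⟨p', hp', hbp'⟩ := h hb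
  rw [r.eq_of_mem_parts hp hp' hxp (hbp' hxb)]
  exact ⟨b, mem_filter.mpr ⟨hb, hbp'⟩, hxb⟩

lemma injOn_filter_subset (h : q ≤ r) :
    Set.InjOn (fun p => q.parts.filter (· ⊆ p)) r.parts := fun p hp p' hp' hpp' => by
  rw [← sup_filter_subset_eq h hp, ← sup_filter_subset_eq h hp']
  exact congrArg (·.sup id) hpp'

def groupParts (h : q ≤ r) : Finpartition q.parts :=
  ofExistsUnique (r.parts.image fun p => q.parts.filter (· ⊆ p))
    (by
      simp only [mem_image]
      rintro _ ⟨p, -, rfl⟩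
      exact filter_subset _ _)
    (by
      intro b hb
      obtain ⟨p, hp, hbp⟩ := h hb
      refine ⟨_, ⟨mem_image_of_mem _ hp, mem_filter.mpr ⟨hb, hbp⟩⟩, ?_⟩
      simp only [mem_image]
      rintro _ ⟨⟨p', hp', rfl⟩, hbp'⟩
      obtain ⟨x, hx⟩ := q.nonempty_of_mem_parts hb
      rw [r.eq_of_mem_parts hp' hp ((mem_filter.mp hbp').2 hx) (hbp hx)])
    (by
      simp only [mem_image]
      rintro ⟨p, hp, hpq⟩
      have := sup_filter_subset_eq h hp
      rw [hpq, sup_empty] at this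
      exact r.ne_bot hp this.symm)

lemma groupParts_parts (h : q ≤ r) :
    (groupParts h).parts = r.parts.image fun p => q.parts.filter (· ⊆ p) := rfl

lemma card_groupParts (h : q ≤ r) : #(groupParts h).parts = #r.parts :=
  card_image_of_injOn (injOn_filter_subset h)

lemma prod_groupParts {M : Type*} [CommMonoid M] (h : q ≤ r) (f : Finset (Finset α) → M) :
    ∏ c ∈ (groupParts h).parts, f c = ∏ p ∈ r.parts, f (q.parts.filter (· ⊆ p)) :=
  prod_image (injOn_filter_subset h)

theorem image_sup_eq_parts_iff (t : Finpartition q.parts) :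
    t.parts.image (fun c => c.sup id) = r.parts ↔ ∃ h : q ≤ r, t = groupParts h := by
  constructor
  · intro ht
    have hle : q ≤ r := fun b hb => by
      obtain ⟨c, hc, hbc⟩ := t.exists_mem hb
      exact ⟨c.sup id, ht ▸ mem_image_of_mem _ hc, le_sup (f := id) hbc⟩
    refine ⟨hle, Finpartition.ext ?_⟩
    rw [groupParts_parts, ← ht, image_image]
    exact (image_congr (fun c hc => filter_subset_sup_eq t hc)).trans image_id |>.symm
  · rintro ⟨h, rfl⟩
    rw [groupParts_parts, image_image]
    exact (image_congr (fun p hp => sup_filter_subset_eq h hp)).trans image_id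

open Classical in
lemma sum_ite_image_sup_eq {M : Type*} [AddCommMonoid M] (F : Finpartition q.parts → M) :
    ∑ t : Finpartition q.parts, (if t.parts.image (fun c => c.sup id) = r.parts then F t else 0)
      = if h : q ≤ r then F (groupParts h) else 0 := by
  split_ifs with h
  · rw [Fintype.sum_eq_single (groupParts h), if_pos ((image_sup_eq_parts_iff _).mpr ⟨h, rfl⟩)]
    intro t ht
    rw [if_neg]
    rintro hi
    obtain ⟨_, rfl⟩ := (image_sup_eq_parts_iff t).mp hi
    exact ht rfl
  · exact sum_eq_zero fun t _ => if_neg fun hi => h ((image_sup_eq_parts_iff t).mp hi).1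

lemma bind_le (Q : ∀ p ∈ r.parts, Finpartition p) : r.bind Q ≤ r := fun b hb => by
  obtain ⟨p, hp, hb⟩ := mem_bind.mp hb
  exact ⟨p, hp, (Q p hp).le hb⟩

lemma filter_subset_bind (Q : ∀ p ∈ r.parts, Finpartition p) {p : Finset α} (hp : p ∈ r.parts) :
    (r.bind Q).parts.filter (· ⊆ p) = (Q p hp).parts := by
  ext b
  rw [mem_filter, mem_bind]
  refine ⟨fun ⟨⟨p', hp', hb⟩, hbp⟩ => ?_, fun hb => ⟨⟨p, hp, hb⟩, (Q p hp).le hb⟩⟩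
  obtain ⟨x, hx⟩ := (Q p' hp').nonempty_of_mem_parts hb
  obtain rfl := r.eq_of_mem_parts hp hp' (hbp hx) ((Q p' hp').le hb hx)
  exact hb

open Classical in
/-- Partitions refining `r` are the families of partitions of the blocks of `r`. -/
theorem sum_ite_le_eq_prod_sum {M : Type*} [CommSemiring M] (w : Finset (Finset α) → M) :
    ∑ q : Finpartition s, (if q ≤ r then ∏ p ∈ r.parts, w (q.parts.filter (· ⊆ p)) else 0)
      = ∏ p ∈ r.parts, ∑ π : Finpartition p, w π.parts := by
  rw [← sum_filter, ← prod_coe_sort, Fintype.prod_sum]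
  refine sum_bij' (fun q hq p => q.ofSubset (filter_subset (· ⊆ p.1) _)
      (sup_filter_subset_eq (mem_filter.mp hq).2 p.2))
    (fun Q _ => r.bind fun p hp => Q ⟨p, hp⟩) (fun _ _ => mem_univ _)
    (fun Q _ => mem_filter.mpr ⟨mem_univ _, bind_le _⟩) ?_ ?_ ?_
  · intro q hq
    ext b
    rw [mem_bind]
    refine ⟨fun ⟨p, hp, hb⟩ => (mem_filter.mp hb).1, fun hb => ?_⟩
    obtain ⟨p, hp, hbp⟩ := (mem_filter.mp hq).2 hb
    exact ⟨p, hp, mem_filter.mpr ⟨hb, hbp⟩⟩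
  · intro Q _
    funext p
    exact Finpartition.ext (filter_subset_bind _ p.2)
  · intro q _
    rw [← prod_coe_sort]
    rfl

variable {u B : Finset α}

lemma parts_avoid_of_mem (P : Finpartition u) (hB : B ∈ P.parts) :
    (P.avoid B).parts = P.parts.erase B := by
  ext c
  rw [mem_avoid, mem_erase]
  constructor
  · rintro ⟨d, hd, hdB, rfl⟩
    have hne : d ≠ B := fun h => hdB h.le
    have hdisj : Disjoint d B := P.disjoint hd hB hne
    rw [sdiff_eq_self_of_disjoint hdisj]
    exact ⟨hne, hd⟩
  · rintro ⟨hne, hc⟩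
    have hdisj : Disjoint c B := P.disjoint hc hB hne
    refine ⟨c, hc, fun hcB => P.ne_bot hc ?_, sdiff_eq_self_of_disjoint hdisj⟩
    exact hdisj.eq_bot_of_le hcB

/-- Choosing a partition of `u` and one of its blocks `B` is the same as choosing a nonempty
`B ⊆ u` and a partition of `u \ B`. -/
theorem sum_sum_parts_erase {M : Type*} [AddCommMonoid M]
    (f : Finset α → Finset (Finset α) → M) :
    ∑ P : Finpartition u, ∑ B ∈ P.parts, f B (P.parts.erase B)
      = ∑ B ∈ u.powerset with B.Nonempty, ∑ Q : Finpartition (u \ B), f B Q.parts := by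
  rw [sum_sigma', sum_sigma']
  refine sum_bij' (fun x _ => ⟨x.2, x.1.avoid x.2⟩)
    (fun y hy =>
      have hB := mem_filter.mp (mem_sigma.mp hy).1
      ⟨y.2.extend (b := y.1) (nonempty_iff_ne_empty.mp hB.2) sdiff_disjoint
        (sdiff_union_of_subset (mem_powerset.mp hB.1)), y.1⟩)
    ?_ ?_ ?_ ?_ ?_
  · rintro ⟨P, B⟩ h
    obtain ⟨-, hB⟩ := mem_sigma.mp h
    exact mem_sigma.mpr ⟨mem_filter.mpr ⟨mem_powerset.mpr (P.le hB),
      P.nonempty_of_mem_parts hB⟩, mem_univ _⟩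
  · rintro ⟨B, Q⟩ -
    exact mem_sigma.mpr ⟨mem_univ _, mem_insert_self _ _⟩
  · rintro ⟨P, B⟩ h
    obtain ⟨-, hB⟩ := mem_sigma.mp h
    refine Sigma.ext (Finpartition.ext ?_) HEq.rfl
    simp only [extend_parts, parts_avoid_of_mem P hB, insert_erase hB]
  · rintro ⟨B, Q⟩ h
    refine Sigma.ext rfl (heq_of_eq (Finpartition.ext ?_))
    rw [parts_avoid_of_mem _ (by exact mem_insert_self B Q.parts)]
    refine erase_insert fun hB => ?_
    obtain ⟨x, hx⟩ := Q.nonempty_of_mem_parts hB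
    exact (mem_sdiff.mp (Q.le hB hx)).2 hx
  · rintro ⟨P, B⟩ h
    obtain ⟨-, hB⟩ := mem_sigma.mp h
    simp only [parts_avoid_of_mem P hB]

end Finpartition

def coeffOneSubDivOneAdd : ℕ → ℤ
  | 0 => 1
  | n + 1 => 2 * (-1) ^ (n + 1)

lemma sum_antidiagonal_coeffOneSubDivOneAdd (n : ℕ) :
    ∑ p ∈ antidiagonal n, coeffOneSubDivOneAdd p.2 = (-1) ^ n := by
  induction n with
  | zero => simp [coeffOneSubDivOneAdd]
  | succ n ih =>
    rw [Nat.sum_antidiagonal_succ, ih, coeffOneSubDivOneAdd]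
    ring

lemma sum_antidiagonal_mul_coeffOneSubDivOneAdd (n : ℕ) :
    ∑ p ∈ antidiagonal n, (p.1 : ℤ) * coeffOneSubDivOneAdd p.2 = if Odd n then 1 else 0 := by
  induction n with
  | zero => simp
  | succ n ih =>
    rw [Nat.sum_antidiagonal_succ]
    simp only [Nat.cast_zero, zero_mul, zero_add, Nat.cast_add_one, add_mul, one_mul,
      sum_add_distrib, ih, sum_antidiagonal_coeffOneSubDivOneAdd, Nat.odd_add_one]
    rcases Nat.even_or_odd n with hn | hn
    · simp [hn.neg_one_pow, Nat.not_odd_iff_even.mpr hn]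
    · simp [hn, hn.neg_one_pow]

/-- The product formula for exponential generating functions. -/
lemma sum_powerset_factorial_mul_factorial {α : Type*} [DecidableEq α] (u : Finset α)
    (f g : ℕ → ℤ) :
    ∑ B ∈ u.powerset, (#B)! * f #B * ((#(u \ B))! * g #(u \ B))
      = (#u)! * ∑ p ∈ antidiagonal #u, f p.1 * g p.2 := by
  rw [sum_congr rfl fun B hB => by rw [card_sdiff_of_subset (mem_powerset.mp hB)],
    sum_powerset_apply_card (fun k => (k)! * f k * ((#u - k)! * g (#u - k))),
    Nat.sum_antidiagonal_eq_sum_range_succ (fun i j => f i * g j), mul_sum]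
  refine sum_congr rfl fun k hk => ?_
  have hfact := Nat.choose_mul_factorial_mul_factorial (Nat.lt_succ_iff.mp (mem_range.mp hk))
  rw [nsmul_eq_mul, ← hfact]
  push_cast
  ring

section BlockSums

variable {α : Type*} [DecidableEq α] {u : Finset α}

def blockWeight (P : Finset (Finset α)) : ℤ := (-2) ^ #P * ∏ b ∈ P, ((#b)! : ℤ)

noncomputable def orderedBlockSum (u : Finset α) : ℤ :=
  ∑ π : Finpartition u, blockWeight π.parts * (#π.parts)!

noncomputable def cyclicBlockSum (u : Finset α) : ℤ :=
  ∑ π : Finpartition u, blockWeight π.parts * (#π.parts - 1)!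

lemma blockWeight_eq_mul_erase {P : Finset (Finset α)} {B : Finset α} (hB : B ∈ P) :
    blockWeight P = -2 * (#B)! * blockWeight (P.erase B) := by
  rw [blockWeight, blockWeight, ← mul_prod_erase P _ hB, ← card_erase_add_one hB, pow_succ]
  ring

lemma blockWeight_eq_prod_parts {P : Finset (Finset α)} (t : Finpartition P) :
    blockWeight P = ∏ c ∈ t.parts, blockWeight c := by
  simp only [blockWeight, prod_mul_distrib, prod_pow_eq_pow_sum, t.sum_card_parts,
    t.prod_prod_parts]

lemma sum_sum_parts_mul_blockWeight (g : ℕ → ℤ)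
    (hu : ∀ t ⊂ u, orderedBlockSum t = (#t)! * coeffOneSubDivOneAdd #t) :
    ∑ π : Finpartition u, (∑ B ∈ π.parts, g #B) * (blockWeight π.parts * (#π.parts - 1)!)
      = (#u)! * ∑ p ∈ antidiagonal #u,
          (if p.1 = 0 then 0 else -2 * g p.1) * coeffOneSubDivOneAdd p.2 := by
  simp_rw [sum_mul]
  rw [sum_congr rfl fun π _ => sum_congr rfl fun B hB => by
      rw [blockWeight_eq_mul_erase hB, ← card_erase_of_mem hB],
    Finpartition.sum_sum_parts_erase
      (fun B Q => g #B * (-2 * (#B)! * blockWeight Q * (#Q)!)),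
    ← sum_powerset_factorial_mul_factorial u (fun i => if i = 0 then 0 else -2 * g i),
    sum_filter]
  refine sum_congr rfl fun B hB => ?_
  rcases B.eq_empty_or_nonempty with rfl | hB'
  · simp
  · rw [if_pos hB', if_neg (card_ne_zero.mpr hB'),
      ← hu _ (sdiff_ssubset (mem_powerset.mp hB) hB'), orderedBlockSum, mul_sum]
    refine sum_congr rfl fun Q _ => by ring

theorem orderedBlockSum_eq_factorial_mul (u : Finset α) :
    orderedBlockSum u = (#u)! * coeffOneSubDivOneAdd #u := by
  induction u using Finset.strongInduction with
  | H u ih =>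
  obtain rfl | hu := u.eq_empty_or_nonempty
  · change ∑ π : Finpartition (⊥ : Finset α), _ = _
    rw [Fintype.sum_unique, (default : Finpartition (⊥ : Finset α)).parts_eq_empty_iff.mpr rfl]
    simp [blockWeight, coeffOneSubDivOneAdd]
  obtain ⟨n, hn⟩ : ∃ n, #u = n + 1 := Nat.exists_eq_add_one.mpr (card_pos.mpr hu)
  have hsum : orderedBlockSum u = ∑ π : Finpartition u,
      (∑ B ∈ π.parts, (1 : ℤ)) * (blockWeight π.parts * (#π.parts - 1)!) := by
    refine sum_congr rfl fun π _ => ?_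
    rw [sum_const, nsmul_one,
      ← Nat.mul_factorial_pred (card_ne_zero.mpr (π.parts_nonempty hu.ne_empty))]
    push_cast
    ring
  rw [hsum, sum_sum_parts_mul_blockWeight (fun _ => 1) ih, hn, Nat.sum_antidiagonal_succ]
  simp only [if_pos, if_neg (Nat.add_one_ne_zero _), zero_mul, zero_add, mul_one, ← mul_sum,
    sum_antidiagonal_coeffOneSubDivOneAdd]
  rw [coeffOneSubDivOneAdd]
  ring

theorem cyclicBlockSum_eq (hu : u.Nonempty) :
    cyclicBlockSum u = if Odd #u then -2 * ((#u - 1)! : ℤ) else 0 := by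
  have hcard : (#u : ℤ) ≠ 0 := by exact_mod_cast (card_pos.mpr hu).ne'
  refine mul_left_cancel₀ hcard ?_
  have hsum : (#u : ℤ) * cyclicBlockSum u = ∑ π : Finpartition u,
      (∑ B ∈ π.parts, (#B : ℤ)) * (blockWeight π.parts * (#π.parts - 1)!) := by
    rw [cyclicBlockSum, mul_sum]
    refine sum_congr rfl fun π _ => ?_
    rw [← Nat.cast_sum, π.sum_card_parts]
  have hterm : ∀ p ∈ antidiagonal #u, (if p.1 = 0 then 0 else -2 * (p.1 : ℤ)) *
      coeffOneSubDivOneAdd p.2 = -2 * (p.1 * coeffOneSubDivOneAdd p.2) := by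
    intro p _
    split_ifs with h <;> simp [h, mul_assoc]
  rw [hsum, sum_sum_parts_mul_blockWeight _ fun t _ => orderedBlockSum_eq_factorial_mul t,
    sum_congr rfl hterm, ← mul_sum, sum_antidiagonal_mul_coeffOneSubDivOneAdd,
    ← Nat.mul_factorial_pred (card_ne_zero.mpr hu)]
  split_ifs <;> push_cast <;> ring

end BlockSums

lemma two_pow_mul_neg_one_pow_sub {a b : ℕ} (h : b ≤ a) :
    (2 : ℤ) ^ a * (-1) ^ (a - b) = (-1) ^ b * (-2) ^ a := by
  obtain ⟨k, rfl⟩ := Nat.exists_eq_add_of_le h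
  have hsq : ((-1 : ℤ) ^ b) * (-1) ^ b = 1 := by rw [← mul_pow]; norm_num
  rw [Nat.add_sub_cancel_left, neg_pow (2 : ℤ), pow_add (-1 : ℤ)]
  linear_combination (-(-1 : ℤ) ^ k * 2 ^ (b + k)) * hsq

lemma signed_weight_eq_prod_blockWeight {α : Type*} [DecidableEq α] {s : Finset α}
    (q : Finpartition s) (t : Finpartition q.parts) :
    (2 : ℤ) ^ #q.parts * (-1) ^ (#q.parts - #t.parts) * (∏ b ∈ q.parts, ((#b)! : ℤ)) *
        ∏ c ∈ t.parts, ((#c - 1)! : ℤ)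
      = (-1) ^ #t.parts * ∏ c ∈ t.parts, blockWeight c * (#c - 1)! := by
  rw [two_pow_mul_neg_one_pow_sub t.card_parts_le_card, mul_assoc _ ((-2 : ℤ) ^ _),
    ← blockWeight.eq_1, blockWeight_eq_prod_parts t, prod_mul_distrib]
  ring

theorem signed_sum_over_flattening_fiber_general (n : ℕ)
    (r : Finpartition (Finset.univ : Finset (Fin n))) :
    ∑ q : Finpartition (Finset.univ : Finset (Fin n)),
      ∑ t : Finpartition q.parts,
        (if t.parts.image (fun s => s.sup id) = r.parts then
          (2 : ℤ) ^ q.parts.card * (-1 : ℤ) ^ (q.parts.card - t.parts.card) *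
            (∏ b ∈ q.parts, (Nat.factorial b.card : ℤ)) *
            (∏ c ∈ t.parts, (Nat.factorial (c.card - 1) : ℤ))
        else 0)
    = if ∀ p ∈ r.parts, Odd p.card then
        (2 : ℤ) ^ r.parts.card * ∏ p ∈ r.parts, (Nat.factorial (p.card - 1) : ℤ)
      else 0 := by
  classical
  calc
    _ = (-1) ^ #r.parts * ∑ q : Finpartition (univ : Finset (Fin n)), if q ≤ r then
          ∏ p ∈ r.parts, blockWeight (q.parts.filter (· ⊆ p)) * (#(q.parts.filter (· ⊆ p)) - 1)!
          else 0 := by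
      rw [mul_sum]
      refine sum_congr rfl fun q _ => ?_
      simp only [signed_weight_eq_prod_blockWeight, Finpartition.sum_ite_image_sup_eq]
      split_ifs with h
      · rw [Finpartition.card_groupParts, Finpartition.prod_groupParts]
      · rw [mul_zero]
    _ = (-1) ^ #r.parts * ∏ p ∈ r.parts, cyclicBlockSum p := by
      rw [Finpartition.sum_ite_le_eq_prod_sum fun P => blockWeight P * (#P - 1)!]
      rfl
    _ = _ := by
      split_ifs with hodd
      · rw [prod_congr rfl fun p hp =>
          (cyclicBlockSum_eq (r.nonempty_of_mem_parts hp)).trans (if_pos (hodd p hp)),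
          prod_mul_distrib, prod_const, ← mul_assoc, ← mul_pow]
        norm_num
      · push Not at hodd
        obtain ⟨p, hp, heven⟩ := hodd
        rw [prod_eq_zero hp ((cyclicBlockSum_eq (r.nonempty_of_mem_parts hp)).trans
          (if_neg heven)), mul_zero]

theorem signed_sum_over_flattening_fiber (n : ℕ) (hn : 0 < n)
    (r : Finpartition (Finset.univ : Finset (Fin n))) :
    ∑ q : Finpartition (Finset.univ : Finset (Fin n)),
      ∑ t : Finpartition q.parts,
        (if t.parts.image (fun s => s.sup id) = r.parts then
          (2 : ℤ) ^ q.parts.card * (-1 : ℤ) ^ (q.parts.card - t.parts.card) *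
            (∏ b ∈ q.parts, (Nat.factorial b.card : ℤ)) *
            (∏ c ∈ t.parts, (Nat.factorial (c.card - 1) : ℤ))
        else 0)
    = if ∀ p ∈ r.parts, Odd p.card then
        (2 : ℤ) ^ r.parts.card * ∏ p ∈ r.parts, (Nat.factorial (p.card - 1) : ℤ)
      else 0 :=
  signed_sum_over_flattening_fiber_general n r
end
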